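/- arXiv:1901.00389 — 2 statements merged into one kernel-verified Lean document; each statement's English description precedes it below -/
import Mathlib

section
/- Let V be a finite vertex set partitioned into a set of depots I and a set of targets J, and let x be an integer-valued edge multiplicity function on unordered pairs of distinct vertices of V satisfying: x{i,i'} = 0 for all depots i, i' ∈ I (no depot–depot edges); x{j,l} ∈ {0,1} for all targets j, l ∈ J; x{i,j} ∈ {0,1,2} for all i ∈ I, j ∈ J; every target j ∈ J has degree exactly 2 in the multigraph defined by x (i.e., the sum of x over all pairs incident to j equals 2); and every connected component of the support graph of x that contains a target contains exactly one depot. Then for every pair of distinct targets j, l ∈ J and every proper subset I' ⊂ I, the path elimination inequality Σ_{i ∈ I'} x{i,j} + 3·x{j,l} + Σ_{k ∈ I∖I'} x{k,l} ≤ 4 holds. -/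
/-!
Every pair incident to a target carries a nonnegative weight, so each of the two partial sums
plus `x{j,l}` is bounded by the degree `2` of its target. If `x{j,l} = 0` this already gives `4`.
If `x{j,l} = 1`, both sums being positive would put a depot of `I'` and a depot of `I ∖ I'` in
the support component of `j` (through `j` and through `l`), contradicting uniqueness of the depot.
-/

open Finset

section
variable {V : Type*} [Fintype V] [DecidableEq V]

lemma sum_add_le_sum_erase (x : Sym2 V → ℤ) {a b : V} {S : Finset V} (hba : b ≠ a)
    (haS : a ∉ S) (hbS : b ∉ S) (hnn : ∀ v, 0 ≤ x s(a, v)) :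
    ∑ i ∈ S, x s(i, a) + x s(a, b) ≤ ∑ v ∈ univ.erase a, x s(a, v) :=
  calc ∑ i ∈ S, x s(i, a) + x s(a, b) = ∑ v ∈ insert b S, x s(a, v) := by
        rw [sum_insert hbS, add_comm]
        exact congrArg _ (sum_congr rfl fun _ _ => congrArg x Sym2.eq_swap)
    _ ≤ ∑ v ∈ univ.erase a, x s(a, v) := by
        refine sum_le_sum_of_subset_of_nonneg (insert_subset (by simp [hba]) ?_)
          fun v _ _ => hnn v
        exact fun v hv => mem_erase.mpr ⟨fun h => haS (h ▸ hv), mem_univ v⟩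

lemma incident_weight_nonneg {I J : Finset V} (hpart : I ∪ J = univ) {x : Sym2 V → ℤ}
    (hJJ : ∀ j ∈ J, ∀ l ∈ J, x s(j, l) = 0 ∨ x s(j, l) = 1)
    (hIJ : ∀ i ∈ I, ∀ j ∈ J, x s(i, j) = 0 ∨ x s(i, j) = 1 ∨ x s(i, j) = 2)
    {a : V} (ha : a ∈ J) (v : V) : 0 ≤ x s(a, v) := by
  rcases mem_union.mp (hpart ▸ mem_univ v) with hv | hv
  · rw [Sym2.eq_swap]; rcases hIJ v hv a ha with h | h | h <;> omega
  · rcases hJJ a ha v hv with h | h <;> omega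

end

lemma SimpleGraph.fromRel_reachable_of_rel {V : Type*} {r : V → V → Prop} {u v : V}
    (h : r u v) : (SimpleGraph.fromRel r).Reachable u v := by
  by_cases huv : u = v
  · exact huv ▸ SimpleGraph.Reachable.refl u
  · exact (SimpleGraph.fromRel_adj r u v |>.mpr ⟨huv, .inl h⟩).reachable

theorem path_elimination_two_vertex_valid_general {V : Type*} [Fintype V] [DecidableEq V]
    (I J : Finset V) (hdisj : Disjoint I J) (hpart : I ∪ J = Finset.univ)
    (x : Sym2 V → ℤ)
    (hJJ : ∀ j ∈ J, ∀ l ∈ J, x s(j, l) = 0 ∨ x s(j, l) = 1)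
    (hIJ : ∀ i ∈ I, ∀ j ∈ J, x s(i, j) = 0 ∨ x s(i, j) = 1 ∨ x s(i, j) = 2)
    (hdeg : ∀ j ∈ J, ∑ v ∈ Finset.univ.erase j, x s(j, v) = 2)
    (hcomp : ∀ j ∈ J, ∃! i : V, i ∈ I ∧
      (SimpleGraph.fromRel fun u v => x s(u, v) ≠ 0).Reachable j i) :
    ∀ j ∈ J, ∀ l ∈ J, j ≠ l → ∀ I' : Finset V, I' ⊂ I →
      (∑ i ∈ I', x s(i, j)) + 3 * x s(j, l) + (∑ k ∈ I \ I', x s(k, l)) ≤ 4 := by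
  intro j hj l hl hjl I' hI'
  have hnn := fun a (ha : a ∈ J) => incident_weight_nonneg hpart hJJ hIJ ha
  have hnotin : ∀ {a}, a ∈ J → ∀ {S}, S ⊆ I → a ∉ S := fun ha _ hS h =>
    disjoint_left.mp hdisj (hS h) ha
  have hA : ∑ i ∈ I', x s(i, j) + x s(j, l) ≤ 2 := hdeg j hj ▸
    sum_add_le_sum_erase x hjl.symm (hnotin hj hI'.subset) (hnotin hl hI'.subset) (hnn j hj)
  have hC : ∑ k ∈ I \ I', x s(k, l) + x s(j, l) ≤ 2 := Sym2.eq_swap (a := l) ▸ hdeg l hl ▸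
    sum_add_le_sum_erase x hjl (hnotin hl sdiff_subset) (hnotin hj sdiff_subset) (hnn l hl)
  have hA0 : 0 ≤ ∑ i ∈ I', x s(i, j) := sum_nonneg fun i _ => Sym2.eq_swap (a := i) ▸ hnn j hj i
  have hC0 : 0 ≤ ∑ k ∈ I \ I', x s(k, l) :=
    sum_nonneg fun k _ => Sym2.eq_swap (a := k) ▸ hnn l hl k
  have hsep : x s(j, l) ≠ 0 → ∑ i ∈ I', x s(i, j) = 0 ∨ ∑ k ∈ I \ I', x s(k, l) = 0 := by
    intro hjl0
    by_contra! hpos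
    obtain ⟨i, hi, hij⟩ := exists_ne_zero_of_sum_ne_zero hpos.1
    obtain ⟨k, hk, hkl⟩ := exists_ne_zero_of_sum_ne_zero hpos.2
    rw [Sym2.eq_swap] at hij hkl
    set G := SimpleGraph.fromRel fun u v => x s(u, v) ≠ 0
    have hreach_i : G.Reachable j i := SimpleGraph.fromRel_reachable_of_rel hij
    have hreach_l : G.Reachable j l := SimpleGraph.fromRel_reachable_of_rel hjl0
    have hreach_k : G.Reachable j k := hreach_l.trans (SimpleGraph.fromRel_reachable_of_rel hkl)
    have hik : i = k := (hcomp j hj).unique ⟨hI'.subset hi, hreach_i⟩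
      ⟨sdiff_subset hk, hreach_k⟩
    exact (mem_sdiff.mp hk).2 (hik ▸ hi)
  rcases hJJ j hj l hl with h | h <;> rw [h] at hA hC hsep ⊢ <;> omega

/-- Two-vertex path elimination constraints are valid for feasible multi-depot route
solutions.  `V` is partitioned into depots `I` and targets `J`; `x` is an integer edge
multiplicity function on unordered pairs of distinct vertices with no depot–depot edges,
`x{j,l} ∈ {0,1}` for targets `j,l`, `x{i,j} ∈ {0,1,2}` for a depot `i` and a target `j`,
every target has degree exactly `2`, and every connected component of the support graph
of `x` containing a target contains exactly one depot.  Then for all distinct targets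
`j, l ∈ J` and every proper subset `I' ⊂ I`,
`∑_{i ∈ I'} x{i,j} + 3·x{j,l} + ∑_{k ∈ I∖I'} x{k,l} ≤ 4`. -/
theorem path_elimination_two_vertex_valid {V : Type*} [Fintype V] [DecidableEq V]
    (I J : Finset V) (hdisj : Disjoint I J) (hpart : I ∪ J = Finset.univ)
    (x : Sym2 V → ℤ)
    (hdiag : ∀ v : V, x s(v, v) = 0)
    (hII : ∀ i ∈ I, ∀ i' ∈ I, x s(i, i') = 0)
    (hJJ : ∀ j ∈ J, ∀ l ∈ J, x s(j, l) = 0 ∨ x s(j, l) = 1)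
    (hIJ : ∀ i ∈ I, ∀ j ∈ J, x s(i, j) = 0 ∨ x s(i, j) = 1 ∨ x s(i, j) = 2)
    (hdeg : ∀ j ∈ J, ∑ v ∈ Finset.univ.erase j, x s(j, v) = 2)
    (hcomp : ∀ j ∈ J, ∃! i : V, i ∈ I ∧
      (SimpleGraph.fromRel fun u v => x s(u, v) ≠ 0).Reachable j i) :
    ∀ j ∈ J, ∀ l ∈ J, j ≠ l → ∀ I' : Finset V, I' ⊂ I →
      (∑ i ∈ I', x s(i, j)) + 3 * x s(j, l) + (∑ k ∈ I \ I', x s(k, l)) ≤ 4 :=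
  path_elimination_two_vertex_valid_general I J hdisj hpart x hJJ hIJ hdeg hcomp
end

section
/- Let V be a finite vertex set partitioned into a set of depots I and a set of targets J, and let x be an integer-valued edge multiplicity function on unordered pairs of distinct vertices of V satisfying: x{i,i'} = 0 for all depots i, i' ∈ I (no depot–depot edges); x{j,l} ∈ {0,1} for all targets j, l ∈ J; x{i,j} ∈ {0,1,2} for all i ∈ I, j ∈ J; every target j ∈ J has degree exactly 2 in the multigraph defined by x; and every connected component of the support graph of x that contains a target contains exactly one depot. Then for every pair of distinct targets j, l ∈ J, every nonempty subset S ⊆ J∖{j,l}, and every proper subset I' ⊂ I, the path elimination inequality Σ_{i ∈ I'} x{i,j} + 2·x(γ(S ∪ {j,l})) + Σ_{k ∈ I∖I'} x{k,l} ≤ 2|S| + 3 holds, where x(γ(T)) denotes the sum of x{u,v} over all unordered pairs {u,v} with both u and v in T. -/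
open Finset

private lemma sym2_double {V : Type*} [DecidableEq V] (x : Sym2 V → ℤ) (T : Finset V) :
    ∑ v ∈ T, ∑ u ∈ T.erase v, x s(v, u)
      = 2 * ∑ e ∈ T.sym2.filter (fun e => ¬ e.IsDiag), x e := by
  induction T using Finset.induction with
  | empty => simp
  | @insert a s ha ih =>
    have hkey : (insert a s).sym2.filter (fun e => ¬ e.IsDiag)
        = (s.image fun b => s(a, b)) ∪ s.sym2.filter (fun e => ¬ e.IsDiag) := by
      rw [Finset.sym2_insert]
      ext e
      simp only [Finset.mem_filter, Finset.mem_union, Finset.mem_image, Finset.mem_insert]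
      constructor
      · rintro ⟨h1 | h2, hd⟩
        · obtain ⟨b, hb, rfl⟩ := h1
          rcases hb with rfl | hb
          · simp at hd
          · exact Or.inl ⟨b, hb, rfl⟩
        · exact Or.inr ⟨h2, hd⟩
      · rintro (⟨b, hb, rfl⟩ | ⟨h2, hd⟩)
        · refine ⟨Or.inl ⟨b, Or.inr hb, rfl⟩, ?_⟩
          simp only [Sym2.isDiag_iff_proj_eq]
          rintro rfl; exact ha hb
        · exact ⟨Or.inr h2, hd⟩
    have hdisj : Disjoint (s.image fun b => s(a, b)) (s.sym2.filter (fun e => ¬ e.IsDiag)) := by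
      rw [Finset.disjoint_left]
      rintro e he hf
      obtain ⟨b, hb, rfl⟩ := Finset.mem_image.1 he
      have := (Finset.mem_filter.1 hf).1
      rw [Finset.mk_mem_sym2_iff] at this
      exact ha this.1
    have himg : ∑ e ∈ s.image (fun b => s(a, b)), x e = ∑ b ∈ s, x s(a, b) := by
      apply Finset.sum_image
      intro b hb c hc h
      rcases Sym2.eq_iff.1 h with ⟨-, h⟩ | ⟨h1, h2⟩
      · exact h
      · rw [← h1] at hc; exact absurd hc ha
    rw [hkey, Finset.sum_union hdisj, himg]
    rw [Finset.sum_insert ha]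
    have h1 : (insert a s).erase a = s := by
      rw [Finset.erase_insert ha]
    have h2 : ∀ v ∈ s, (insert a s).erase v = insert a (s.erase v) := by
      intro v hv
      rw [Finset.erase_insert_of_ne]
      rintro rfl; exact ha hv
    have h3 : ∑ v ∈ s, ∑ u ∈ (insert a s).erase v, x s(v, u)
        = ∑ v ∈ s, (x s(v, a) + ∑ u ∈ s.erase v, x s(v, u)) :=
      Finset.sum_congr rfl (fun v hv => by
        rw [h2 v hv, Finset.sum_insert (fun h => ha (Finset.mem_of_mem_erase h))])
    have h4 : ∑ v ∈ s, x s(v, a) = ∑ v ∈ s, x s(a, v) :=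
      Finset.sum_congr rfl (fun v _ => by rw [Sym2.eq_swap])
    rw [h1, h3, Finset.sum_add_distrib, h4, ih]
    ring

private lemma reach_closed {V : Type*} {G : SimpleGraph V} {P : V → Prop}
    (h : ∀ u v, G.Adj u v → P u → P v) {s v : V} (hs : P s) (hr : G.Reachable s v) : P v := by
  obtain ⟨w⟩ := hr
  induction w with
  | nil => exact hs
  | cons h' p ih => exact ih (h _ _ h' hs)

private lemma penult {V : Type*} {H : SimpleGraph V} {s j : V} (hne : j ≠ s)
    (hr : H.Reachable s j) : ∃ u, H.Adj u j ∧ H.Reachable s u := by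
  obtain ⟨w⟩ := hr
  cases hw : w.reverse with
  | nil => exact absurd rfl hne
  | cons h' p => exact ⟨_, h'.symm, ⟨p.reverse⟩⟩



/-- General path elimination constraints are valid for feasible multi-depot route
solutions.  `V` is partitioned into depots `I` and targets `J`; `x` is an integer edge
multiplicity function on unordered pairs of distinct vertices with no depot–depot edges,
`x{j,l} ∈ {0,1}` for targets `j,l`, `x{i,j} ∈ {0,1,2}` for a depot `i` and a target `j`,
every target has degree exactly `2`, and every connected component of the support graph
of `x` containing a target contains exactly one depot.  Then for all distinct targets
`j, l ∈ J`, every nonempty `S ⊆ J ∖ {j,l}`, and every proper subset `I' ⊂ I`,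
`∑_{i ∈ I'} x{i,j} + 2·x(γ(S ∪ {j,l})) + ∑_{k ∈ I∖I'} x{k,l} ≤ 2|S| + 3`, where
`x(γ(T))` is the sum of `x` over all unordered pairs of distinct vertices in `T`. -/
theorem path_elimination_general_valid {V : Type*} [Fintype V] [DecidableEq V]
    (I J : Finset V) (hdisj : Disjoint I J) (hpart : I ∪ J = Finset.univ)
    (x : Sym2 V → ℤ)
    (hdiag : ∀ v : V, x s(v, v) = 0)
    (hII : ∀ i ∈ I, ∀ i' ∈ I, x s(i, i') = 0)
    (hJJ : ∀ j ∈ J, ∀ l ∈ J, x s(j, l) = 0 ∨ x s(j, l) = 1)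
    (hIJ : ∀ i ∈ I, ∀ j ∈ J, x s(i, j) = 0 ∨ x s(i, j) = 1 ∨ x s(i, j) = 2)
    (hdeg : ∀ j ∈ J, ∑ v ∈ Finset.univ.erase j, x s(j, v) = 2)
    (hcomp : ∀ j ∈ J, ∃! i : V, i ∈ I ∧
      (SimpleGraph.fromRel fun u v => x s(u, v) ≠ 0).Reachable j i) :
    ∀ j ∈ J, ∀ l ∈ J, j ≠ l → ∀ S : Finset V, S ⊆ J \ {j, l} → S.Nonempty →
      ∀ I' : Finset V, I' ⊂ I →
        (∑ i ∈ I', x s(i, j))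
            + 2 * (∑ e ∈ (S ∪ {j, l}).sym2.filter (fun e => ¬ e.IsDiag), x e)
            + (∑ k ∈ I \ I', x s(k, l)) ≤ 2 * (S.card : ℤ) + 3 := by
  classical
  intro j hj l hl hjl S hS hSne I' hI'
  -- basic nonnegativity
  have hnn : ∀ u v : V, 0 ≤ x s(u, v) := by
    intro u v
    rcases eq_or_ne u v with rfl | huv
    · rw [hdiag]
    have hu : u ∈ I ∪ J := hpart ▸ Finset.mem_univ u
    have hv : v ∈ I ∪ J := hpart ▸ Finset.mem_univ v
    rw [Finset.mem_union] at hu hv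
    rcases hu with hu | hu <;> rcases hv with hv | hv
    · rw [hII u hu v hv]
    · rcases hIJ u hu v hv with h | h | h <;> omega
    · have : x s(u, v) = x s(v, u) := by rw [Sym2.eq_swap]
      rw [this]; rcases hIJ v hv u hu with h | h | h <;> omega
    · rcases hJJ u hu v hv with h | h <;> omega
  set T : Finset V := S ∪ {j, l} with hT
  have hTJ : T ⊆ J := by
    intro v hv
    rcases Finset.mem_union.1 hv with h | h
    · exact (Finset.mem_sdiff.1 (hS h)).1
    · rcases Finset.mem_insert.1 h with rfl | h
      · exact hj
      · rw [Finset.mem_singleton.1 h]; exact hl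
  have hjT : j ∈ T := Finset.mem_union_right _ (by simp)
  have hlT : l ∈ T := Finset.mem_union_right _ (by simp)
  have hSdisj : ∀ v ∈ S, v ≠ j ∧ v ≠ l := by
    intro v hv
    have := Finset.mem_sdiff.1 (hS hv)
    simp only [Finset.mem_insert, Finset.mem_singleton, not_or] at this
    exact this.2
  have hTcard : (T.card : ℤ) = S.card + 2 := by
    rw [hT, Finset.card_union_of_disjoint]
    · have : ({j, l} : Finset V).card = 2 := by
        rw [Finset.card_insert_of_notMem (by simpa using hjl), Finset.card_singleton]
      rw [this]; push_cast; ring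
    · rw [Finset.disjoint_left]
      intro v hv hv2
      rcases Finset.mem_insert.1 hv2 with rfl | h
      · exact (hSdisj v hv).1 rfl
      · exact (hSdisj v hv).2 (Finset.mem_singleton.1 h)
  have hIT : ∀ i ∈ I, i ∉ T := fun i hi hiT =>
    Finset.disjoint_left.1 hdisj hi (hTJ hiT)
  set g : ℤ := ∑ e ∈ T.sym2.filter (fun e => ¬ e.IsDiag), x e with hg
  set c : ℤ := ∑ v ∈ T, ∑ u ∈ Finset.univ \ T, x s(v, u) with hc
  -- degree identity over T
  have hsplit : ∀ (C : Finset V), ∀ v ∈ C,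
      ∑ u ∈ Finset.univ.erase v, x s(v, u)
        = (∑ u ∈ C.erase v, x s(v, u)) + ∑ u ∈ Finset.univ \ C, x s(v, u) := by
    intro C v hv
    rw [← Finset.sum_union]
    · congr 1
      ext u
      simp only [Finset.mem_erase, Finset.mem_union, Finset.mem_sdiff, Finset.mem_univ,
        true_and]
      constructor
      · intro h
        by_cases hu : u ∈ C
        · exact Or.inl ⟨h.1, hu⟩
        · exact Or.inr hu
      · rintro (⟨h1, h2⟩ | h)
        · exact ⟨h1, trivial⟩
        · exact ⟨fun e => h (e ▸ hv), trivial⟩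
    · rw [Finset.disjoint_left]
      rintro u hu hu2
      exact (Finset.mem_sdiff.1 hu2).2 (Finset.mem_of_mem_erase hu)
  have hdegT : 2 * (T.card : ℤ) = 2 * g + c := by
    have h1 : ∑ v ∈ T, ∑ u ∈ Finset.univ.erase v, x s(v, u) = 2 * T.card := by
      rw [Finset.sum_congr rfl (fun v hv => hdeg v (hTJ hv))]
      simp [mul_comm]
    have h2 : ∑ v ∈ T, ∑ u ∈ Finset.univ.erase v, x s(v, u)
        = (∑ v ∈ T, ∑ u ∈ T.erase v, x s(v, u)) + c := by
      rw [hc, ← Finset.sum_add_distrib]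
      exact Finset.sum_congr rfl (fun v hv => hsplit T v hv)
    rw [← h1, h2, sym2_double]
  set a : ℤ := ∑ i ∈ I', x s(i, j) with ha
  set b : ℤ := ∑ k ∈ I \ I', x s(k, l) with hb
  have hswap : ∀ u v : V, x s(u, v) = x s(v, u) := fun u v => by rw [Sym2.eq_swap]
  -- the key claim
  have hkey : a + b + 1 ≤ c := by
    by_contra hcon
    push_neg at hcon
    -- set up product representation of the cut
    set P : Finset (V × V) := T ×ˢ (Finset.univ \ T) with hP
    set Pspec : Finset (V × V) := ({j} ×ˢ I') ∪ ({l} ×ˢ (I \ I')) with hPspec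
    have hcP : c = ∑ p ∈ P, x s(p.1, p.2) := by
      rw [hc, Finset.sum_product]
    have hsub : Pspec ⊆ P := by
      intro p hp
      rw [hPspec, Finset.mem_union] at hp
      rcases hp with hp | hp
      · obtain ⟨h1, h2⟩ := Finset.mem_product.1 hp
        exact Finset.mem_product.2 ⟨by rw [Finset.mem_singleton.1 h1]; exact hjT,
          Finset.mem_sdiff.2 ⟨Finset.mem_univ _, hIT _ (hI'.subset h2)⟩⟩
      · obtain ⟨h1, h2⟩ := Finset.mem_product.1 hp
        exact Finset.mem_product.2 ⟨by rw [Finset.mem_singleton.1 h1]; exact hlT,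
          Finset.mem_sdiff.2 ⟨Finset.mem_univ _, hIT _ (Finset.mem_sdiff.1 h2).1⟩⟩
    have hPspecSum : ∑ p ∈ Pspec, x s(p.1, p.2) = a + b := by
      rw [hPspec, Finset.sum_union]
      · congr 1
        · rw [Finset.sum_product, Finset.sum_singleton, ha]
          exact Finset.sum_congr rfl (fun i _ => hswap j i)
        · rw [Finset.sum_product, Finset.sum_singleton, hb]
          exact Finset.sum_congr rfl (fun k _ => hswap l k)
      · rw [Finset.disjoint_left]
        rintro p hp1 hp2
        obtain ⟨h1, -⟩ := Finset.mem_product.1 hp1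
        obtain ⟨h2, -⟩ := Finset.mem_product.1 hp2
        exact hjl ((Finset.mem_singleton.1 h1).symm.trans (Finset.mem_singleton.1 h2))
    have hable : a + b ≤ c := by
      rw [hcP, ← hPspecSum]
      exact Finset.sum_le_sum_of_subset_of_nonneg hsub (fun p _ _ => hnn p.1 p.2)
    have hceq : c = a + b := by omega
    have hzero : ∀ p ∈ P \ Pspec, x s(p.1, p.2) = 0 := by
      have hsum0 : ∑ p ∈ P \ Pspec, x s(p.1, p.2) = 0 := by
        have := Finset.sum_sdiff hsub (f := fun p : V × V => x s(p.1, p.2))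
        rw [hPspecSum, ← hcP] at this
        linarith
      intro p hp
      exact (Finset.sum_eq_zero_iff_of_nonneg (fun q _ => hnn q.1 q.2)).1 hsum0 p hp
    have hcut : ∀ v ∈ T, ∀ u, u ∉ T → ¬(v = j ∧ u ∈ I') → ¬(v = l ∧ u ∈ I \ I') →
        x s(v, u) = 0 := by
      intro v hv u hu h1 h2
      refine hzero (v, u) (Finset.mem_sdiff.2 ⟨?_, ?_⟩)
      · exact Finset.mem_product.2 ⟨hv, Finset.mem_sdiff.2 ⟨Finset.mem_univ _, hu⟩⟩
      · rw [hPspec, Finset.mem_union]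
        rintro (hp | hp)
        · obtain ⟨e1, e2⟩ := Finset.mem_product.1 hp
          exact h1 ⟨Finset.mem_singleton.1 e1, e2⟩
        · obtain ⟨e1, e2⟩ := Finset.mem_product.1 hp
          exact h2 ⟨Finset.mem_singleton.1 e1, e2⟩
    -- the component of a vertex of S within T
    obtain ⟨s₀, hs₀S⟩ := hSne
    have hs₀T : s₀ ∈ T := Finset.mem_union_left _ hs₀S
    set G : SimpleGraph V := SimpleGraph.fromRel fun u v => x s(u, v) ≠ 0 with hG
    set H : SimpleGraph V :=
      SimpleGraph.fromRel (fun u v => u ∈ T ∧ v ∈ T ∧ x s(u, v) ≠ 0) with hH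
    have hAdjH : ∀ u v, H.Adj u v → u ∈ T ∧ v ∈ T ∧ x s(u, v) ≠ 0 ∧ u ≠ v := by
      intro u v h
      rw [hH, SimpleGraph.fromRel_adj] at h
      obtain ⟨hne, h⟩ := h
      rcases h with ⟨h1, h2, h3⟩ | ⟨h1, h2, h3⟩
      · exact ⟨h1, h2, h3, hne⟩
      · exact ⟨h2, h1, by rw [hswap]; exact h3, hne⟩
    set C : Finset V := Finset.univ.filter (fun v => H.Reachable s₀ v) with hCdef
    have hs₀C : s₀ ∈ C := Finset.mem_filter.2 ⟨Finset.mem_univ _, SimpleGraph.Reachable.refl _⟩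
    have hCT : ∀ v ∈ C, v ∈ T := by
      intro v hv
      exact reach_closed (fun u w hA _ => (hAdjH u w hA).2.1) hs₀T (Finset.mem_filter.1 hv).2
    have hCcl : ∀ u ∈ C, ∀ v, v ∈ T → x s(u, v) ≠ 0 → v ∈ C := by
      intro u hu v hvT hx
      rcases eq_or_ne v u with rfl | hne
      · exact hu
      have hAdj : H.Adj u v := by
        rw [hH, SimpleGraph.fromRel_adj]
        exact ⟨hne.symm, Or.inl ⟨hCT u hu, hvT, hx⟩⟩
      exact Finset.mem_filter.2 ⟨Finset.mem_univ _,
        (Finset.mem_filter.1 hu).2.trans hAdj.reachable⟩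
    have hext : ∀ v ∈ C, ∑ u ∈ Finset.univ \ C, x s(v, u)
        = if v = j then a else if v = l then b else 0 := by
      intro v hv
      have hvT := hCT v hv
      have hother : ∀ u ∈ Finset.univ \ C, u ∈ T → x s(v, u) = 0 := by
        intro u hu huT
        by_contra hx
        exact (Finset.mem_sdiff.1 hu).2 (hCcl v hv u huT hx)
      by_cases hvj : v = j
      · subst hvj
        rw [if_pos rfl, ha]
        have hI'sub : I' ⊆ Finset.univ \ C := by
          intro i hi
          exact Finset.mem_sdiff.2 ⟨Finset.mem_univ _,
            fun hiC => hIT i (hI'.subset hi) (hCT i hiC)⟩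
        rw [show (∑ i ∈ I', x s(i, v)) = ∑ i ∈ I', x s(v, i) from
          Finset.sum_congr rfl (fun i _ => hswap i v)]
        refine (Finset.sum_subset hI'sub ?_).symm
        intro u hu huI'
        by_cases huT : u ∈ T
        · exact hother u hu huT
        · exact hcut v hvT u huT (fun h => huI' h.2) (fun h => hjl h.1)
      · by_cases hvl : v = l
        · subst hvl
          rw [if_neg hvj, if_pos rfl, hb]
          have hIsub : I \ I' ⊆ Finset.univ \ C := by
            intro k hk
            exact Finset.mem_sdiff.2 ⟨Finset.mem_univ _,
              fun hkC => hIT k (Finset.mem_sdiff.1 hk).1 (hCT k hkC)⟩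
          rw [show (∑ k ∈ I \ I', x s(k, v)) = ∑ k ∈ I \ I', x s(v, k) from
            Finset.sum_congr rfl (fun k _ => hswap k v)]
          refine (Finset.sum_subset hIsub ?_).symm
          intro u hu huK
          by_cases huT : u ∈ T
          · exact hother u hu huT
          · exact hcut v hvT u huT (fun h => hvj h.1) (fun h => huK h.2)
        · rw [if_neg hvj, if_neg hvl]
          refine Finset.sum_eq_zero (fun u hu => ?_)
          by_cases huT : u ∈ T
          · exact hother u hu huT
          · exact hcut v hvT u huT (fun h => hvj h.1) (fun h => hvl h.1)
    have hinner : ∀ v ∈ C, ∑ u ∈ C.erase v, x s(v, u)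
        = 2 - (if v = j then a else if v = l then b else 0) := by
      intro v hv
      have h1 := hsplit C v hv
      rw [hdeg v (hTJ (hCT v hv)), hext v hv] at h1
      omega
    set aC : ℤ := if j ∈ C then a else 0 with haC
    set bC : ℤ := if l ∈ C then b else 0 with hbC
    have hCsum : ∑ v ∈ C, ∑ u ∈ C.erase v, x s(v, u) = 2 * C.card - (aC + bC) := by
      rw [Finset.sum_congr rfl hinner, Finset.sum_sub_distrib]
      congr 1
      · simp [mul_comm]
      · have hsplitIf : ∀ v : V, (if v = j then a else if v = l then b else 0)
            = (if v = j then a else 0) + (if v = l then b else 0) := by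
          intro v
          by_cases h1 : v = j
          · subst h1
            rw [if_pos rfl, if_pos rfl, if_neg hjl]
            ring
          · rw [if_neg h1, if_neg h1, zero_add]
        rw [Finset.sum_congr rfl (fun v _ => hsplitIf v), Finset.sum_add_distrib,
          Finset.sum_ite_eq' C j (fun _ => a), Finset.sum_ite_eq' C l (fun _ => b)]
    have hann : 0 ≤ a := Finset.sum_nonneg (fun i _ => hnn i j)
    have hbnn : 0 ≤ b := Finset.sum_nonneg (fun k _ => hnn k l)
    have haCnn : 0 ≤ aC := by rw [haC]; split <;> [exact hann; rfl]
    have hbCnn : 0 ≤ bC := by rw [hbC]; split <;> [exact hbnn; rfl]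
    have heven : aC + bC = 2 * C.card - 2 * (∑ e ∈ C.sym2.filter (fun e => ¬ e.IsDiag), x e) := by
      have := sym2_double x C
      omega
    -- positivity of aC + bC
    have hGAdj : ∀ u v, G.Adj u v → x s(u, v) ≠ 0 ∧ u ≠ v := by
      intro u v h
      rw [hG, SimpleGraph.fromRel_adj] at h
      obtain ⟨hne, h⟩ := h
      rcases h with h | h
      · exact ⟨h, hne⟩
      · exact ⟨by rw [hswap]; exact h, hne⟩
    have hpos : aC + bC ≠ 0 := by
      intro h0
      have haC0 : aC = 0 := by omega
      have hbC0 : bC = 0 := by omega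
      have hfull : ∀ u ∈ C, ∀ v, x s(u, v) ≠ 0 → v ∈ C := by
        intro u hu v hx
        by_cases hvT : v ∈ T
        · exact hCcl u hu v hvT hx
        have huT := hCT u hu
        by_cases h1 : u = j ∧ v ∈ I'
        · obtain ⟨rfl, hvI'⟩ := h1
          rw [haC, if_pos hu] at haC0
          have : x s(v, u) = 0 := by
            refine (Finset.sum_eq_zero_iff_of_nonneg (fun i _ => hnn i u)).1 ?_ v hvI'
            rw [← ha]; exact haC0
          rw [hswap] at hx
          exact absurd this hx
        by_cases h2 : u = l ∧ v ∈ I \ I'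
        · obtain ⟨rfl, hvK⟩ := h2
          rw [hbC, if_pos hu] at hbC0
          have : x s(v, u) = 0 := by
            refine (Finset.sum_eq_zero_iff_of_nonneg (fun k _ => hnn k u)).1 ?_ v hvK
            rw [← hb]; exact hbC0
          rw [hswap] at hx
          exact absurd this hx
        · exact absurd (hcut u huT v hvT h1 h2) hx
      obtain ⟨i₀, ⟨hi₀I, hi₀r⟩, -⟩ := hcomp s₀ (hTJ hs₀T)
      have hi₀C : i₀ ∈ C :=
        reach_closed (fun u v hA hu => hfull u hu v (hGAdj u v hA).1) hs₀C hi₀r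
      exact hIT i₀ hi₀I (hCT i₀ hi₀C)
    -- a, b ≤ 2
    have haLe : a ≤ 2 := by
      have h1 : a = ∑ i ∈ I', x s(j, i) := Finset.sum_congr rfl (fun i _ => hswap i j)
      have h2 : I' ⊆ Finset.univ.erase j := by
        intro i hi
        exact Finset.mem_erase.2 ⟨fun e => hIT i (hI'.subset hi) (e ▸ hjT), Finset.mem_univ _⟩
      calc a ≤ ∑ u ∈ Finset.univ.erase j, x s(j, u) := by
              rw [h1]; exact Finset.sum_le_sum_of_subset_of_nonneg h2 (fun u _ _ => hnn j u)
        _ = 2 := hdeg j hj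
    have hbLe : b ≤ 2 := by
      have h1 : b = ∑ k ∈ I \ I', x s(l, k) := Finset.sum_congr rfl (fun k _ => hswap k l)
      have h2 : I \ I' ⊆ Finset.univ.erase l := by
        intro k hk
        exact Finset.mem_erase.2 ⟨fun e => hIT k (Finset.mem_sdiff.1 hk).1 (e ▸ hlT),
          Finset.mem_univ _⟩
      calc b ≤ ∑ u ∈ Finset.univ.erase l, x s(l, u) := by
              rw [h1]; exact Finset.sum_le_sum_of_subset_of_nonneg h2 (fun u _ _ => hnn l u)
        _ = 2 := hdeg l hl
    -- case analysis
    by_cases hcase1 : j ∈ C ∧ a = 2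
    · obtain ⟨hjC, ha2⟩ := hcase1
      have hj0 : ∑ u ∈ C.erase j, x s(j, u) = 0 := by
        have := hinner j hjC
        rw [if_pos rfl] at this
        omega
      have hjne : j ≠ s₀ := fun e => (hSdisj s₀ hs₀S).1 e.symm
      obtain ⟨u, hadj, hru⟩ := penult hjne (Finset.mem_filter.1 hjC).2
      obtain ⟨huT, -, hxuj, hunej⟩ := hAdjH u j hadj
      have huC : u ∈ C := Finset.mem_filter.2 ⟨Finset.mem_univ _, hru⟩
      have huCe : u ∈ C.erase j := Finset.mem_erase.2 ⟨hunej, huC⟩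
      have h1 : x s(j, u) ≤ 0 := hj0 ▸ Finset.single_le_sum (fun i _ => hnn j i) huCe
      have h2 : x s(j, u) ≠ 0 := by rw [hswap]; exact hxuj
      have := hnn j u
      omega
    by_cases hcase2 : l ∈ C ∧ b = 2
    · obtain ⟨hlC, hb2⟩ := hcase2
      have hl0 : ∑ u ∈ C.erase l, x s(l, u) = 0 := by
        have := hinner l hlC
        rw [if_neg (Ne.symm hjl), if_pos rfl] at this
        omega
      have hlne : l ≠ s₀ := fun e => (hSdisj s₀ hs₀S).2 e.symm
      obtain ⟨u, hadj, hru⟩ := penult hlne (Finset.mem_filter.1 hlC).2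
      obtain ⟨huT, -, hxul, hunel⟩ := hAdjH u l hadj
      have huC : u ∈ C := Finset.mem_filter.2 ⟨Finset.mem_univ _, hru⟩
      have huCe : u ∈ C.erase l := Finset.mem_erase.2 ⟨hunel, huC⟩
      have h1 : x s(l, u) ≤ 0 := hl0 ▸ Finset.single_le_sum (fun i _ => hnn l i) huCe
      have h2 : x s(l, u) ≠ 0 := by rw [hswap]; exact hxul
      have := hnn l u
      omega
    -- remaining: aC = bC = 1, so a = 1, b = 1, j ∈ C, l ∈ C
    have haC1 : aC ≤ 1 := by
      rw [haC]
      split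
      · rcases lt_or_eq_of_le haLe with h | h
        · omega
        · exact absurd ⟨by assumption, h⟩ hcase1
      · omega
    have hbC1 : bC ≤ 1 := by
      rw [hbC]
      split
      · rcases lt_or_eq_of_le hbLe with h | h
        · omega
        · exact absurd ⟨by assumption, h⟩ hcase2
      · omega
    have haCbC : aC = 1 ∧ bC = 1 := by omega
    have hjC : j ∈ C := by
      by_contra h
      rw [haC, if_neg h] at haCbC
      omega
    have hlC : l ∈ C := by
      by_contra h
      rw [hbC, if_neg h] at haCbC
      omega
    have ha1 : a = 1 := by rw [haC, if_pos hjC] at haCbC; exact haCbC.1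
    have hb1 : b = 1 := by rw [hbC, if_pos hlC] at haCbC; exact haCbC.2
    obtain ⟨i₁, hi₁I', hxi₁⟩ : ∃ i ∈ I', x s(i, j) ≠ 0 := by
      by_contra h
      push_neg at h
      rw [ha, Finset.sum_eq_zero h] at ha1
      omega
    obtain ⟨i₂, hi₂K, hxi₂⟩ : ∃ k ∈ I \ I', x s(k, l) ≠ 0 := by
      by_contra h
      push_neg at h
      rw [hb, Finset.sum_eq_zero h] at hb1
      omega
    have hHleG : H ≤ G := by
      intro u v h
      obtain ⟨-, -, hx, hne⟩ := hAdjH u v h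
      rw [hG, SimpleGraph.fromRel_adj]
      exact ⟨hne, Or.inl hx⟩
    have hr1 : G.Reachable s₀ i₁ := by
      have hrj : G.Reachable s₀ j := SimpleGraph.Reachable.mono hHleG (Finset.mem_filter.1 hjC).2
      have hadj : G.Adj j i₁ := by
        rw [hG, SimpleGraph.fromRel_adj]
        exact ⟨fun e => hIT i₁ (hI'.subset hi₁I') (e ▸ hjT), Or.inr hxi₁⟩
      exact hrj.trans hadj.reachable
    have hr2 : G.Reachable s₀ i₂ := by
      have hrl : G.Reachable s₀ l := SimpleGraph.Reachable.mono hHleG (Finset.mem_filter.1 hlC).2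
      have hadj : G.Adj l i₂ := by
        rw [hG, SimpleGraph.fromRel_adj]
        exact ⟨fun e => hIT i₂ (Finset.mem_sdiff.1 hi₂K).1 (e ▸ hlT), Or.inr hxi₂⟩
      exact hrl.trans hadj.reachable
    obtain ⟨i₀, -, huniq⟩ := hcomp s₀ (hTJ hs₀T)
    have e1 : i₁ = i₀ := huniq i₁ ⟨hI'.subset hi₁I', hr1⟩
    have e2 : i₂ = i₀ := huniq i₂ ⟨(Finset.mem_sdiff.1 hi₂K).1, hr2⟩
    exact (Finset.mem_sdiff.1 hi₂K).2 ((e2.trans e1.symm) ▸ hi₁I')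
  -- conclude
  have : a + 2 * g + b ≤ 2 * S.card + 3 := by
    have := hTcard
    linarith [hdegT, hkey]
  simpa [ha, hb, hg, hT] using this
end
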